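/- arXiv:2408.02801 — 2 statements merged into one kernel-verified Lean document; each statement's English description precedes it below -/
import Mathlib

section
/- Let L : ℝ^t → ℝ be differentiable and suppose Θ* = (w*, b*) is a local minimizer of Θ ↦ L(Θ) + λ*‖w‖₁ with λ* > 0. Define a_i = |(∂L/∂w_i)(Θ*)| for i = 1,…,d_W, sorted nondecreasingly as a_{i_1} ≤ … ≤ a_{i_{d_W}}. If there exists l ∈ {0,1,…,d_W} such that a_{i_j} < λ* for all j ≤ d_W − l and a_{i_j} = λ* for all j > d_W − l, then the number of nonzero components of w* is at most l. -/
/-! Moving a nonzero coordinate `w_i` along a line is a smooth one-dimensional perturbation, along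
which the penalty `λ‖w‖₁` has derivative `λ · sign w_i`; Fermat's rule then forces
`∂L/∂w_i = -λ · sign w_i`, so `a_i = |λ| ≥ λ`. Hence the `d_W - l` sorted indices with
`a_{i_j} < λ` all carry `w_i = 0`, leaving at most `l` nonzero coordinates. -/

open Finset

theorem IsLocalMin.fderiv_apply_add_eq_zero {E : Type*} [NormedAddCommGroup E] [NormedSpace ℝ E]
    {f g : E → ℝ} {x v : E} {d : ℝ} (hmin : IsLocalMin (fun y => f y + g y) x)
    (hf : DifferentiableAt ℝ f x) (hg : HasDerivAt (fun t : ℝ => g (x + t • v)) d 0) :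
    fderiv ℝ f x v + d = 0 := by
  have hline : HasDerivAt (fun t : ℝ => x + t • v) v 0 := by
    simpa using ((hasDerivAt_id (0 : ℝ)).smul_const v).const_add x
  have hf' : HasDerivAt (fun t : ℝ => f (x + t • v)) (fderiv ℝ f x v) 0 :=
    hf.hasFDerivAt.comp_hasDerivAt_of_eq 0 hline (by simp)
  have hmin' : IsLocalMin (fun t : ℝ => f (x + t • v) + g (x + t • v)) 0 :=
    IsLocalMin.comp_continuous (f := fun y => f y + g y) (g := fun t : ℝ => x + t • v)
      (by simpa using hmin) hline.continuousAt
  exact hmin'.hasDerivAt_eq_zero (hf'.add hg)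

theorem hasDerivAt_sum_abs_add_smul_single {ι : Type*} [Fintype ι] [DecidableEq ι]
    {w : ι → ℝ} {i : ι} (hi : w i ≠ 0) :
    HasDerivAt (fun t : ℝ => ∑ j, |(w + t • Pi.single i (1 : ℝ) : ι → ℝ) j|)
      (SignType.sign (w i) : ℝ) 0 := by
  have hterm : ∀ j ∈ (univ : Finset ι),
      HasDerivAt (fun t : ℝ => |(w + t • Pi.single i (1 : ℝ) : ι → ℝ) j|)
        (if i = j then (SignType.sign (w i) : ℝ) else 0) 0 := by
    intro j _
    by_cases hij : i = j
    · subst hij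
      simpa [add_comm] using
        HasDerivAt.comp_const_add (w i) (0 : ℝ) (by simpa using hasDerivAt_abs hi)
    · simpa [hij, Pi.single_apply, Ne.symm hij] using hasDerivAt_const (0 : ℝ) |w j|
  simpa using HasDerivAt.fun_sum hterm

theorem abs_fderiv_apply_single_eq_of_isLocalMin {ι F : Type*} [Fintype ι] [DecidableEq ι]
    [NormedAddCommGroup F] [NormedSpace ℝ F] {L : (ι → ℝ) × F → ℝ} {lam : ℝ}
    {Θ : (ι → ℝ) × F}
    (hmin : IsLocalMin (fun Θ : (ι → ℝ) × F => L Θ + lam * ∑ i, |Θ.1 i|) Θ)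
    (hL : DifferentiableAt ℝ L Θ) {i : ι} (hi : Θ.1 i ≠ 0) :
    |fderiv ℝ L Θ (Pi.single i 1, 0)| = |lam| := by
  have hpen := (hasDerivAt_sum_abs_add_smul_single hi).const_mul lam
  have hcrit := hmin.fderiv_apply_add_eq_zero hL (v := (Pi.single i 1, 0)) (by simpa using hpen)
  rw [eq_neg_of_add_eq_zero_left hcrit, abs_neg, abs_mul]
  rcases hi.lt_or_gt with h | h <;> simp [h]

theorem Fin.card_le_of_forall_lt_sub_apply_notMem {n l : ℕ} {s : Finset (Fin n)}
    (σ : Equiv.Perm (Fin n))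
    (h : ∀ j : Fin n, (j : ℕ) < n - l → σ j ∉ s) : #s ≤ l := by
  have hmaps : Set.MapsTo (fun i => (σ.symm i : ℕ)) s (Ico (n - l) n) := by
    intro i hi
    refine mem_Ico.2 ⟨not_lt.1 fun hlt => h _ hlt (by simpa using hi), (σ.symm i).isLt⟩
  have := card_le_card_of_injOn _ hmaps (fun i _ j _ hij => σ.symm.injective (Fin.ext hij))
  simp only [Nat.card_Ico] at this
  omega

theorem stmt5_general {dW db : ℕ}
    (L : (Fin dW → ℝ) × (Fin db → ℝ) → ℝ) (hL : Differentiable ℝ L)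
    (lam : ℝ)
    (Θs : (Fin dW → ℝ) × (Fin db → ℝ))
    (hmin : IsLocalMin (fun Θ : (Fin dW → ℝ) × (Fin db → ℝ) =>
      L Θ + lam * ∑ i, |Θ.1 i|) Θs)
    (a : Fin dW → ℝ)
    (ha : ∀ i, a i = |fderiv ℝ L Θs (Pi.single i 1, 0)|)
    (σ : Equiv.Perm (Fin dW))
    (l : ℕ)
    (hbelow : ∀ j : Fin dW, (j : ℕ) < dW - l → a (σ j) < lam) :
    (Finset.univ.filter fun i => Θs.1 i ≠ 0).card ≤ l := by
  refine Fin.card_le_of_forall_lt_sub_apply_notMem σ fun j hj hmem => ?_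
  have hactive : a (σ j) = |lam| := by
    rw [ha]
    exact abs_fderiv_apply_single_eq_of_isLocalMin hmin (hL Θs) (mem_filter.1 hmem).2
  exact (hactive ▸ hbelow j hj).not_ge (le_abs_self lam)

theorem stmt5 {dW db : ℕ}
    (L : (Fin dW → ℝ) × (Fin db → ℝ) → ℝ) (hL : Differentiable ℝ L)
    (lam : ℝ) (hlam : 0 < lam)
    (Θs : (Fin dW → ℝ) × (Fin db → ℝ))
    (hmin : IsLocalMin (fun Θ : (Fin dW → ℝ) × (Fin db → ℝ) =>
      L Θ + lam * ∑ i, |Θ.1 i|) Θs)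
    (a : Fin dW → ℝ)
    (ha : ∀ i, a i = |fderiv ℝ L Θs (Pi.single i 1, 0)|)
    (σ : Equiv.Perm (Fin dW)) (hσ : Monotone fun j => a (σ j))
    (l : ℕ) (hl : l ≤ dW)
    (hbelow : ∀ j : Fin dW, (j : ℕ) < dW - l → a (σ j) < lam)
    (heq : ∀ j : Fin dW, dW - l ≤ (j : ℕ) → a (σ j) = lam) :
    (Finset.univ.filter fun i => Θs.1 i ≠ 0).card ≤ l :=
  stmt5_general L hL lam Θs hmin a ha σ l hbelow
end

section
/- Let L : ℝ^t → ℝ be differentiable and suppose Θ* = (w*, b*) is a local minimizer of Θ ↦ L(Θ) + λ*‖w‖₁ with λ* > 0, where w* has exactly l* nonzero components. Then there exists l ∈ {l*, l*+1, …, d_W} such that, with a_i = |(∂L/∂w_i)(Θ*)| sorted nondecreasingly as a_{i_1} ≤ … ≤ a_{i_{d_W}}, one has a_{i_j} < λ* for all j ≤ d_W − l and a_{i_j} = λ* for all j > d_W − l. -/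
/-!
Along the line through `Θ*` in the direction of the weight `w_i`, the objective is
`t ↦ f t + λ * |w*_i + t| + const` with `f' 0 = ∂L/∂w_i (Θ*)`, and it has a local minimum at `0`.
If `w*_i ≠ 0` the penalty is differentiable there and Fermat's rule gives
`∂L/∂w_i = -λ * sign w*_i`; if `w*_i = 0`, the one-sided Fermat conditions give
`|∂L/∂w_i| ≤ λ`. Hence every `a_i ≤ λ`, with equality on the support of `w*`. Since the sorted
sequence is monotone and bounded by `λ`, the indices where it equals `λ` form a final segment,
whose length `l` is at least the size `l*` of the support.
-/

open Finset

theorem IsLocalMinOn.nonneg_of_hasDerivWithinAt_Ici {f : ℝ → ℝ} {f' a : ℝ}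
    (h : IsLocalMinOn f (Set.Ici a) a) (hf : HasDerivWithinAt f f' (Set.Ici a) a) : 0 ≤ f' := by
  have hone : (1 : ℝ) ∈ posTangentConeAt (Set.Ici a) a :=
    mem_posTangentConeAt_of_segment_subset (by simp [segment_eq_Icc, Set.Icc_subset_Ici_self])
  simpa using h.hasFDerivWithinAt_nonneg hf.hasFDerivWithinAt hone

theorem abs_le_of_isLocalMin_add_mul_abs {f : ℝ → ℝ} {D lam : ℝ} (hf : HasDerivAt f D 0)
    (hmin : IsLocalMin (fun t => f t + lam * |t|) 0) : |D| ≤ lam := by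
  have key : ∀ s : ℝ, |s| = 1 → 0 ≤ s * D + lam := by
    intro s hs
    have hmin_s : IsLocalMin (fun t => f (s * t) + lam * |s * t|) 0 :=
      (show IsLocalMin (fun t => f t + lam * |t|) (s * 0) by rwa [mul_zero]).comp_continuous
        (by fun_prop)
    -- For `t ≥ 0` the penalty `λ * |s * t|` is the linear function `λ * t`.
    have hmin_Ici : IsLocalMinOn (fun t => f (s * t) + lam * t) (Set.Ici 0) 0 := by
      refine (hmin_s.on _).congr
        (eventually_nhdsWithin_of_forall fun t (ht : 0 ≤ t) => ?_) Set.self_mem_Ici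
      dsimp only
      rw [abs_mul, hs, one_mul, abs_of_nonneg ht]
    have hderiv : HasDerivAt (fun t => f (s * t) + lam * t) (s * D + lam) 0 := by
      have hlin : HasDerivAt (fun t : ℝ => s * t) s 0 := by
        simpa using (hasDerivAt_id 0).const_mul s
      have hid : HasDerivAt (fun t : ℝ => lam * t) lam 0 := by
        simpa using (hasDerivAt_id 0).const_mul lam
      rw [mul_comm s D]
      exact (hf.comp_of_eq 0 hlin (mul_zero s).symm).add hid
    exact hmin_Ici.nonneg_of_hasDerivWithinAt_Ici hderiv.hasDerivWithinAt
  exact abs_le.mpr ⟨by linarith [key 1 (by simp)], by linarith [key (-1) (by simp)]⟩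

theorem eq_neg_mul_sign_of_isLocalMin_add_mul_abs {f : ℝ → ℝ} {D lam c : ℝ} (hc : c ≠ 0)
    (hf : HasDerivAt f D 0) (hmin : IsLocalMin (fun t => f t + lam * |c + t|) 0) :
    D = -(lam * SignType.sign c) := by
  have habs : HasDerivAt (fun t => |c + t|) (SignType.sign c) 0 := by
    have hshift : HasDerivAt (fun t : ℝ => c + t) 1 0 := (hasDerivAt_id 0).const_add c
    rw [← mul_one (SignType.sign c : ℝ)]
    exact (hasDerivAt_abs hc).comp_of_eq 0 hshift (add_zero c).symm
  exact eq_neg_of_add_eq_zero_left (hmin.hasDerivAt_eq_zero (hf.add (habs.const_mul lam)))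

section Coordinate

variable {ι F : Type*} [Fintype ι] [DecidableEq ι] [NormedAddCommGroup F] [NormedSpace ℝ F]
  {L : (ι → ℝ) × F → ℝ} {lam : ℝ} {Θ : (ι → ℝ) × F}

theorem sum_abs_fst_add_smul_single (Θ : (ι → ℝ) × F) (i : ι) (t : ℝ) :
    ∑ j, |(Θ + t • (Pi.single i 1, 0)).1 j| = ∑ j ∈ univ.erase i, |Θ.1 j| + |Θ.1 i + t| := by
  rw [← sum_erase_add _ _ (mem_univ i)]
  congr 1
  · exact sum_congr rfl fun j hj => by simp [ne_of_mem_erase hj]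
  · simp

theorem IsLocalMin.add_mul_abs_along_coord
    (hmin : IsLocalMin (fun Θ => L Θ + lam * ∑ j, |Θ.1 j|) Θ) (i : ι) :
    IsLocalMin (fun t : ℝ => (L (Θ + t • (Pi.single i 1, 0)) +
      lam * ∑ j ∈ univ.erase i, |Θ.1 j|) + lam * |Θ.1 i + t|) 0 := by
  have hmin' : IsLocalMin (fun Θ => L Θ + lam * ∑ j, |Θ.1 j|)
      ((fun t : ℝ => Θ + t • (Pi.single i 1, 0)) 0) := by simpa using hmin
  have hline := hmin'.comp_continuous (g := fun t : ℝ => Θ + t • (Pi.single i 1, 0)) (by fun_prop)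
  simpa only [Function.comp_def, sum_abs_fst_add_smul_single, mul_add, ← add_assoc] using hline

theorem abs_fderiv_single_eq (hlam : 0 ≤ lam) (hL : DifferentiableAt ℝ L Θ)
    (hmin : IsLocalMin (fun Θ => L Θ + lam * ∑ j, |Θ.1 j|) Θ) {i : ι} (hi : Θ.1 i ≠ 0) :
    |fderiv ℝ L Θ (Pi.single i 1, 0)| = lam := by
  have hD := eq_neg_mul_sign_of_isLocalMin_add_mul_abs hi
    ((hL.hasFDerivAt.hasLineDerivAt _).add_const _) (hmin.add_mul_abs_along_coord i)
  rcases hi.lt_or_gt with h | h <;> simp [hD, h, abs_of_nonneg hlam]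

theorem abs_fderiv_single_le (hlam : 0 ≤ lam) (hL : DifferentiableAt ℝ L Θ)
    (hmin : IsLocalMin (fun Θ => L Θ + lam * ∑ j, |Θ.1 j|) Θ) (i : ι) :
    |fderiv ℝ L Θ (Pi.single i 1, 0)| ≤ lam := by
  by_cases hi : Θ.1 i = 0
  · have hline := hmin.add_mul_abs_along_coord i
    rw [hi] at hline
    simp only [zero_add] at hline
    exact abs_le_of_isLocalMin_add_mul_abs ((hL.hasFDerivAt.hasLineDerivAt _).add_const _) hline
  · exact (abs_fderiv_single_eq hlam hL hmin hi).le

end Coordinate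

theorem Monotone.apply_eq_iff_le_of_forall_le {n : ℕ} {α : Type*} [LinearOrder α]
    {b : Fin n → α} {m : α} (hb : Monotone b) (hm : ∀ j, b j ≤ m) (j : Fin n) :
    b j = m ↔ n - #{k | b k = m} ≤ j := by
  set S : Finset (Fin n) := {k | b k = m}
  constructor
  · intro hj
    have hsub : Ici j ⊆ S := fun k hk =>
      mem_filter.mpr ⟨mem_univ k, le_antisymm (hm k) (hj ▸ hb (mem_Ici.mp hk :))⟩
    have := card_le_card hsub
    rw [Fin.card_Ici] at this
    omega
  · intro hj
    by_contra hne
    have hsub : S ⊆ Ioi j := fun k hk => mem_Ioi.mpr <| lt_of_not_ge fun hkj =>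
      hne (le_antisymm (hm j) ((mem_filter.mp hk).2 ▸ hb hkj))
    have := card_le_card hsub
    rw [Fin.card_Ioi] at this
    omega

theorem stmt6 {dW db : ℕ}
    (L : (Fin dW → ℝ) × (Fin db → ℝ) → ℝ) (hL : Differentiable ℝ L)
    (lam : ℝ) (hlam : 0 < lam)
    (Θs : (Fin dW → ℝ) × (Fin db → ℝ))
    (hmin : IsLocalMin (fun Θ : (Fin dW → ℝ) × (Fin db → ℝ) =>
      L Θ + lam * ∑ i, |Θ.1 i|) Θs)
    (ls : ℕ) (hls : (Finset.univ.filter fun i => Θs.1 i ≠ 0).card = ls)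
    (a : Fin dW → ℝ)
    (ha : ∀ i, a i = |fderiv ℝ L Θs (Pi.single i 1, 0)|)
    (σ : Equiv.Perm (Fin dW)) (hσ : Monotone fun j => a (σ j)) :
    ∃ l : ℕ, ls ≤ l ∧ l ≤ dW ∧
      (∀ j : Fin dW, (j : ℕ) < dW - l → a (σ j) < lam) ∧
      (∀ j : Fin dW, dW - l ≤ (j : ℕ) → a (σ j) = lam) := by
  have hle (i) : a i ≤ lam := ha i ▸ abs_fderiv_single_le hlam.le (hL Θs) hmin i
  have heq (i) (hi : Θs.1 i ≠ 0) : a i = lam := ha i ▸ abs_fderiv_single_eq hlam.le (hL Θs) hmin hi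
  have htop := hσ.apply_eq_iff_le_of_forall_le fun j => hle (σ j)
  refine ⟨#{j | a (σ j) = lam}, ?_, ?_, fun j hj => ?_, fun j hj => (htop j).mpr hj⟩
  · calc ls = #{i | Θs.1 i ≠ 0} := hls.symm
      _ ≤ #{i | a i = lam} := card_le_card (monotone_filter_right _ fun i _ => heq i)
      _ = #{j | a (σ j) = lam} := card_equiv σ.symm (by simp)
  · simpa using card_filter_le univ fun j => a (σ j) = lam
  · exact (hle _).lt_of_ne fun h => by have := (htop j).mp h; omega
end
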